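/- Let m₁, m₂ ∈ ℚ with m₁ − m₂ = P/Q, gcd(P,Q) = 1, Q ≥ 2, and assume k₀ := 6(m₁ + m₂) − 1 is an integer; set k₁ := (36(m₁ − m₂)² − 1)/144 ∈ ℚ. Then for each i ∈ {1,2} there exists a unique formal power series g_i ∈ ℚ[[q]] with constant coefficient 1 satisfying L_{m_i}(g_i) = 0. (Consequently the differential equation D_{k₀+2}∘D_{k₀}f = k₁E₄f has the two linearly independent solutions f_i = q^{m_i}·g_i with rational q-expansions.) -/

import Mathlib

/-- The theta operator `θ(f) = q·(df/dq)` on formal power series over `ℚ`. -/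
noncomputable def theta (f : PowerSeries ℚ) : PowerSeries ℚ :=
  PowerSeries.mk fun n => (n : ℚ) * PowerSeries.coeff n f

/-- The weight `2` Eisenstein series `E₂ = 1 − 24·∑_{n≥1} σ₁(n)·qⁿ` as a formal power series. -/
noncomputable def E2 : PowerSeries ℚ :=
  PowerSeries.mk fun n => if n = 0 then 1 else -24 * ∑ d ∈ n.divisors, (d : ℚ)

/-- The weight `4` Eisenstein series `E₄ = 1 + 240·∑_{n≥1} σ₃(n)·qⁿ` as a formal power series. -/
noncomputable def E4 : PowerSeries ℚ :=
  PowerSeries.mk fun n => if n = 0 then 1 else 240 * ∑ d ∈ n.divisors, (d : ℚ) ^ 3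

/-- The operator `A(g) = θ(g) + m·g − (k₀/12)·E₂·g`, the conjugate of `D_{k₀}` under the
substitution `f = q^m·g`. -/
noncomputable def Aop (m : ℚ) (k₀ : ℤ) (g : PowerSeries ℚ) : PowerSeries ℚ :=
  theta g + PowerSeries.C m * g - PowerSeries.C ((k₀ : ℚ) / 12) * (E2 * g)

/-- The operator `L_m(g) = θ(A(g)) + m·A(g) − ((k₀+2)/12)·E₂·A(g) − k₁·E₄·g`, the conjugate
of `D_{k₀+2}∘D_{k₀} − k₁·E₄` under the substitution `f = q^m·g`. -/
noncomputable def Lop (m : ℚ) (k₀ : ℤ) (k₁ : ℚ) (g : PowerSeries ℚ) : PowerSeries ℚ :=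
  theta (Aop m k₀ g) + PowerSeries.C m * Aop m k₀ g
    - PowerSeries.C (((k₀ : ℚ) + 2) / 12) * (E2 * Aop m k₀ g)
    - PowerSeries.C k₁ * (E4 * g)

/-!
The operator `L_m` is triangular with respect to the `q`-adic filtration: if `qⁿ ∣ g`, then the
`n`-th coefficient of `L_m g` is `c(n)·gₙ`, because `E₂` and `E₄` have constant term `1`. The
diagonal is the indicial polynomial, which for the given `k₀, k₁` factors as
`c(n) = (n + m − m₁)(n + m − m₂)`. For `m = mᵢ` it vanishes at `n = 0` and, since `m₁ − m₂` is
not an integer, nowhere else; so the coefficients of a solution with `g₀ = 1` are forced one at a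
time, and defining them by that recursion gives the solution.
-/

open PowerSeries

section Triangular

variable {R : Type*} [CommRing R]

def IsTriangular (T : R⟦X⟧ → R⟦X⟧) (c : ℕ → R) : Prop :=
  ∀ (g : R⟦X⟧) (n : ℕ), X ^ n ∣ g → coeff n (T g) = c n * coeff n g

lemma coeff_mul_of_X_pow_dvd (f : R⟦X⟧) {g : R⟦X⟧} {n : ℕ} (hg : X ^ n ∣ g) :
    coeff n (f * g) = constantCoeff f * coeff n g := by
  obtain ⟨h, rfl⟩ := hg
  rw [mul_left_comm, mul_comm (X ^ n), mul_comm (X ^ n), coeff_mul_X_pow', coeff_mul_X_pow']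
  simp

lemma isTriangular_mul_left (f : R⟦X⟧) : IsTriangular (f * ·) fun _ => constantCoeff f :=
  fun _ _ hg => coeff_mul_of_X_pow_dvd f hg

namespace IsTriangular

variable {S T : R⟦X⟧ → R⟦X⟧} {a c : ℕ → R}

lemma add (hS : IsTriangular S a) (hT : IsTriangular T c) :
    IsTriangular (fun g => S g + T g) fun n => a n + c n := by
  intro g n hg
  rw [map_add, hS g n hg, hT g n hg, add_mul]

lemma sub (hS : IsTriangular S a) (hT : IsTriangular T c) :
    IsTriangular (fun g => S g - T g) fun n => a n - c n := by
  intro g n hg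
  rw [map_sub, hS g n hg, hT g n hg, sub_mul]

lemma X_pow_dvd_apply (hT : IsTriangular T c) {g : R⟦X⟧} {n : ℕ} (hg : X ^ n ∣ g) :
    X ^ n ∣ T g := by
  refine X_pow_dvd_iff.mpr fun j hj => ?_
  rw [hT g j ((pow_dvd_pow X hj.le).trans hg), X_pow_dvd_iff.mp hg j hj, mul_zero]

lemma comp (hS : IsTriangular S a) (hT : IsTriangular T c) :
    IsTriangular (fun g => S (T g)) fun n => a n * c n := by
  intro g n hg
  rw [hS _ n (hT.X_pow_dvd_apply hg), hT g n hg, mul_assoc]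

lemma coeff_apply (hT : IsTriangular T c) (hsub : ∀ g h, T (g - h) = T g - T h)
    (g : R⟦X⟧) (n : ℕ) :
    coeff n (T g) = c n * coeff n g + coeff n (T (trunc n g)) := by
  have hdvd : X ^ n ∣ g - (trunc n g : R⟦X⟧) :=
    X_pow_dvd_iff.mpr fun j hj => by simp [coeff_trunc, hj]
  have h := hT _ n hdvd
  simp only [hsub, map_sub, Polynomial.coeff_coe, coeff_trunc, lt_irrefl, if_false,
    sub_zero] at h
  rw [← h, sub_add_cancel]

lemma eq_of_apply_eq [NoZeroDivisors R] (hT : IsTriangular T c)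
    (hsub : ∀ g h, T (g - h) = T g - T h) (hc : ∀ n, n ≠ 0 → c n ≠ 0) {g h : R⟦X⟧}
    (h₀ : constantCoeff g = constantCoeff h) (hgh : T g = T h) : g = h := by
  have hdvd : ∀ n, X ^ n ∣ g - h := by
    intro n
    induction n with
    | zero => simp
    | succ n ih =>
      refine X_pow_dvd_iff.mpr fun j hj => ?_
      rcases Nat.lt_succ_iff_lt_or_eq.mp hj with hj | rfl
      · exact X_pow_dvd_iff.mp ih j hj
      · rcases eq_or_ne j 0 with rfl | hj₀
        · simp [h₀]
        · have hdiag := hT _ j ih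
          rw [hsub, hgh, sub_self, map_zero] at hdiag
          exact (mul_eq_zero.mp hdiag.symm).resolve_left (hc j hj₀)
  ext n
  simpa [sub_eq_zero] using X_pow_dvd_iff.mp (hdvd (n + 1)) n n.lt_succ_self

end IsTriangular

end Triangular

section Solution

variable {K : Type*} [Field K]

noncomputable def triangularSolutionCoeff (T : K⟦X⟧ → K⟦X⟧) (c : ℕ → K) (n : ℕ) : K :=
  if n = 0 then 1
  else -(c n)⁻¹ *
    coeff n (T (mk fun j => if _ : j < n then triangularSolutionCoeff T c j else 0))
termination_by n

lemma triangularSolutionCoeff_zero (T : K⟦X⟧ → K⟦X⟧) (c : ℕ → K) :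
    triangularSolutionCoeff T c 0 = 1 := by
  rw [triangularSolutionCoeff, if_pos rfl]

lemma triangularSolutionCoeff_of_ne_zero (T : K⟦X⟧ → K⟦X⟧) (c : ℕ → K) {n : ℕ} (hn : n ≠ 0) :
    triangularSolutionCoeff T c n =
      -(c n)⁻¹ * coeff n (T (trunc n (mk (triangularSolutionCoeff T c)))) := by
  rw [triangularSolutionCoeff, if_neg hn]
  congr 4
  ext j
  simp [coeff_trunc]

lemma IsTriangular.existsUnique_apply_eq_zero {T : K⟦X⟧ → K⟦X⟧} {c : ℕ → K}
    (hT : IsTriangular T c) (hsub : ∀ g h, T (g - h) = T g - T h)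
    (hc₀ : c 0 = 0) (hc : ∀ n, n ≠ 0 → c n ≠ 0) :
    ∃! g : K⟦X⟧, constantCoeff g = 1 ∧ T g = 0 := by
  set g := mk (triangularSolutionCoeff T c)
  have hg₀ : constantCoeff g = 1 := by
    rw [← coeff_zero_eq_constantCoeff_apply, coeff_mk, triangularSolutionCoeff_zero]
  have hT0 : T 0 = 0 := by simpa using hsub 0 0
  have hg : T g = 0 := by
    ext n
    rw [hT.coeff_apply hsub, map_zero]
    rcases eq_or_ne n 0 with rfl | hn
    · simp [hc₀, hT0]
    · rw [coeff_mk, triangularSolutionCoeff_of_ne_zero T c hn]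
      field_simp [hc n hn]
      ring
  refine ⟨g, ⟨hg₀, hg⟩, fun h ⟨h₀, hh⟩ => ?_⟩
  exact hT.eq_of_apply_eq hsub hc (h₀.trans hg₀.symm) (hh.trans hg.symm)

end Solution

lemma theta_sub (f g : ℚ⟦X⟧) : theta (f - g) = theta f - theta g := by
  ext n
  simp only [theta, coeff_mk, map_sub, mul_sub]

lemma isTriangular_theta : IsTriangular theta fun n => (n : ℚ) :=
  fun _ _ _ => coeff_mk _ _

lemma constantCoeff_E2 : constantCoeff E2 = 1 := by
  simp [E2, ← coeff_zero_eq_constantCoeff_apply]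

lemma constantCoeff_E4 : constantCoeff E4 = 1 := by
  simp [E4, ← coeff_zero_eq_constantCoeff_apply]

lemma Aop_sub (m : ℚ) (k : ℤ) (f g : ℚ⟦X⟧) : Aop m k (f - g) = Aop m k f - Aop m k g := by
  simp only [Aop, theta_sub, mul_sub]
  ring

lemma isTriangular_Aop (m : ℚ) (k : ℤ) : IsTriangular (Aop m k) fun n => n + m - k / 12 := by
  have h := (isTriangular_theta.add (isTriangular_mul_left (C m))).sub
    ((isTriangular_mul_left (C ((k : ℚ) / 12))).comp (isTriangular_mul_left E2))
  simp only [constantCoeff_C, constantCoeff_E2, mul_one] at h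
  exact h

lemma Lop_eq_Aop_Aop (m : ℚ) (k₀ : ℤ) (k₁ : ℚ) (g : ℚ⟦X⟧) :
    Lop m k₀ k₁ g = Aop m (k₀ + 2) (Aop m k₀ g) - C k₁ * (E4 * g) := by
  simp only [Lop, Aop, Int.cast_add, Int.cast_ofNat]

lemma Lop_sub (m : ℚ) (k₀ : ℤ) (k₁ : ℚ) (f g : ℚ⟦X⟧) :
    Lop m k₀ k₁ (f - g) = Lop m k₀ k₁ f - Lop m k₀ k₁ g := by
  simp only [Lop_eq_Aop_Aop, Aop_sub, mul_sub]
  ring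

lemma isTriangular_Lop (m : ℚ) (k₀ : ℤ) (k₁ : ℚ) :
    IsTriangular (Lop m k₀ k₁) fun n => (n + m - (k₀ + 2) / 12) * (n + m - k₀ / 12) - k₁ := by
  have h := ((isTriangular_Aop m (k₀ + 2)).comp (isTriangular_Aop m k₀)).sub
    ((isTriangular_mul_left (C k₁)).comp (isTriangular_mul_left E4))
  simp only [constantCoeff_C, constantCoeff_E4, mul_one, Int.cast_add, Int.cast_ofNat] at h
  intro g n hg
  rw [Lop_eq_Aop_Aop, h g n hg]

lemma existsUnique_Lop_eq_zero (m m' : ℚ) (k₀ : ℤ) (k₁ : ℚ)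
    (hk₀ : (k₀ : ℚ) = 6 * (m + m') - 1) (hk₁ : k₁ = (36 * (m - m') ^ 2 - 1) / 144)
    (hm : ∀ a : ℤ, m - m' ≠ a) :
    ∃! g : ℚ⟦X⟧, constantCoeff g = 1 ∧ Lop m k₀ k₁ g = 0 := by
  have hdiag : (fun n : ℕ => (n + m - ((k₀ : ℚ) + 2) / 12) * (n + m - k₀ / 12) - k₁) =
      fun n : ℕ => (n : ℚ) * (n + (m - m')) := by
    funext n
    rw [hk₀, hk₁]
    ring
  refine (hdiag ▸ isTriangular_Lop m k₀ k₁).existsUnique_apply_eq_zero (Lop_sub m k₀ k₁)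
    (by simp) fun n hn => mul_ne_zero (Nat.cast_ne_zero.mpr hn) fun h => hm (-n) ?_
  push_cast
  linarith

lemma div_ne_intCast_of_gcd_eq_one {P Q : ℤ} (hPQ : Int.gcd P Q = 1) (hQ : 2 ≤ Q) (a : ℤ) :
    (P / Q : ℚ) ≠ a := by
  intro h
  have hden := Rat.den_div_eq_of_coprime (by omega : 0 < Q) hPQ
  rw [h, Rat.den_intCast, Nat.cast_one] at hden
  omega

/-- With `m₁ − m₂ = P/Q`, `gcd(P,Q) = 1`, `Q ≥ 2`, `k₀ = 6(m₁+m₂) − 1 ∈ ℤ` and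
`k₁ = (36(m₁−m₂)² − 1)/144`, for each `i ∈ {1,2}` there is a unique formal power series
`g_i ∈ ℚ[[q]]` with constant coefficient `1` satisfying `L_{m_i}(g_i) = 0`; consequently
`D_{k₀+2}∘D_{k₀}f = k₁·E₄·f` has the two linearly independent solutions `f_i = q^{m_i}·g_i`
with rational `q`-expansions. -/
theorem existsUnique_solutions (m₁ m₂ : ℚ) (P Q : ℤ) (hPQ : Int.gcd P Q = 1) (hQ : 2 ≤ Q)
    (hm : m₁ - m₂ = (P : ℚ) / (Q : ℚ))
    (k₀ : ℤ) (hk₀ : (k₀ : ℚ) = 6 * (m₁ + m₂) - 1)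
    (k₁ : ℚ) (hk₁ : k₁ = (36 * (m₁ - m₂) ^ 2 - 1) / 144) :
    (∃! g : PowerSeries ℚ, PowerSeries.constantCoeff g = 1 ∧ Lop m₁ k₀ k₁ g = 0) ∧
    (∃! g : PowerSeries ℚ, PowerSeries.constantCoeff g = 1 ∧ Lop m₂ k₀ k₁ g = 0) := by
  have hnonint : ∀ a : ℤ, m₁ - m₂ ≠ a := hm ▸ div_ne_intCast_of_gcd_eq_one hPQ hQ
  refine ⟨existsUnique_Lop_eq_zero m₁ m₂ k₀ k₁ hk₀ hk₁ hnonint,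
    existsUnique_Lop_eq_zero m₂ m₁ k₀ k₁ (by rw [hk₀]; ring) (by rw [hk₁]; ring) fun a h => ?_⟩
  exact hnonint (-a) (by push_cast; linarith)
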